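/- Let G be a finite simple graph with vertex set V and edge set E, and let k be a positive integer. The set of common zeros in ℂ^V of the k-coloring polynomial system of G over ℂ is finite, and its cardinality equals the number of proper k-colorings of G, i.e., the number of functions c : V → {1,…,k} with c(u) ≠ c(v) for every edge {u,v} ∈ E. -/

import Mathlib

/-!
A common zero has `k`-th roots of unity as coordinates. For two such roots `x, y` we have
`(x - y) * ∑ x ^ t * y ^ (k - 1 - t) = x ^ k - y ^ k = 0`, while for `x = y` the sum is
`k * x ^ (k - 1) ≠ 0`; so an edge polynomial vanishes exactly when its endpoints get different
roots. Writing the roots as powers `ζ ^ i`, `i < k`, of a primitive root `ζ` identifies the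
common zeros with the proper colorings `V → Fin k`.
-/

open Finset Function

theorem geom_sum₂_eq_zero_iff_ne {R : Type*} [CommRing R] [NoZeroDivisors R] {x y : R} {n : ℕ}
    (hn : (n : R) ≠ 0) (hx : x ≠ 0) (hxy : x ^ n = y ^ n) :
    ∑ i ∈ range n, x ^ i * y ^ (n - 1 - i) = 0 ↔ x ≠ y := by
  constructor
  · rintro h rfl
    rw [geom_sum₂_self] at h
    exact mul_ne_zero hn (pow_ne_zero _ hx) h
  · intro hne
    have h := geom_sum₂_mul x y n
    rw [hxy, sub_self] at h
    exact (mul_eq_zero.mp h).resolve_right (sub_ne_zero.mpr hne)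

theorem Function.Injective.image_comp_setOf_properColoring {V α β : Type*} (G : SimpleGraph V)
    {f : α → β} (hf : Injective f) :
    (f ∘ ·) '' {c : V → α | ∀ u v, G.Adj u v → c u ≠ c v} =
      {a : V → β | (∀ v, a v ∈ Set.range f) ∧ ∀ u v, G.Adj u v → a u ≠ a v} := by
  ext a
  constructor
  · rintro ⟨c, hc, rfl⟩
    exact ⟨fun v => ⟨c v, rfl⟩, fun u v huv => hf.ne (hc u v huv)⟩
  · rintro ⟨hrange, hproper⟩
    choose c hc using hrange
    have ha : f ∘ c = a := funext hc
    refine ⟨c, fun u v huv hcuv => hproper u v huv ?_, ha⟩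
    rw [← ha, comp_apply, comp_apply, hcuv]

namespace IsPrimitiveRoot

variable {R : Type*} [CommRing R] {ζ : R} {k : ℕ}

theorem injective_pow_fin (h : IsPrimitiveRoot ζ k) : Injective fun i : Fin k => ζ ^ (i : ℕ) :=
  fun i j hij => Fin.ext (h.pow_inj i.2 j.2 hij)

theorem range_pow_fin [IsDomain R] [NeZero k] (h : IsPrimitiveRoot ζ k) :
    Set.range (fun i : Fin k => ζ ^ (i : ℕ)) = {x | x ^ k = 1} := by
  ext x
  constructor
  · rintro ⟨i, rfl⟩
    rw [Set.mem_ofPred_eq, ← pow_mul, mul_comm, pow_mul, h.pow_eq_one, one_pow]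
  · intro hx
    obtain ⟨i, hi, rfl⟩ := h.eq_pow_of_pow_eq_one hx
    exact ⟨⟨i, hi⟩, rfl⟩

end IsPrimitiveRoot

def coloringSystemZeros {V : Type*} (G : SimpleGraph V) (k : ℕ) (R : Type*) [CommRing R] :
    Set (V → R) :=
  {a | (∀ v, a v ^ k - 1 = 0) ∧
    ∀ u v, G.Adj u v → ∑ t ∈ range k, a u ^ t * a v ^ (k - 1 - t) = 0}

theorem coloringSystemZeros_eq_image {V R : Type*} [CommRing R] [IsDomain R] (G : SimpleGraph V)
    {k : ℕ} [NeZero k] {ζ : R} (hζ : IsPrimitiveRoot ζ k) (hk : (k : R) ≠ 0) :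
    coloringSystemZeros G k R =
      ((fun i : Fin k => ζ ^ (i : ℕ)) ∘ ·) '' {c : V → Fin k | ∀ u v, G.Adj u v → c u ≠ c v} := by
  rw [hζ.injective_pow_fin.image_comp_setOf_properColoring, hζ.range_pow_fin]
  ext a
  simp only [coloringSystemZeros, Set.mem_ofPred_eq, sub_eq_zero]
  refine and_congr_right fun hroot => forall₂_congr fun u v => imp_congr_right fun _ => ?_
  refine geom_sum₂_eq_zero_iff_ne hk (fun hu => ?_) ((hroot u).trans (hroot v).symm)
  simpa [hu, NeZero.ne k] using hroot u

/-- The set of common zeros in `ℂ^V` of the `k`-coloring polynomial system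
of a finite simple graph `G` is finite, and its cardinality equals the number of proper
`k`-colorings of `G`, i.e. the number of functions `c : V → Fin k` with `c u ≠ c v` for
every edge `{u,v}`. -/
theorem card_common_zeros_eq_card_proper_colorings
    {V : Type*} [Fintype V] (G : SimpleGraph V) (k : ℕ) (hk : 0 < k) :
    ({a : V → ℂ |
        (∀ v : V, a v ^ k - 1 = 0) ∧
        (∀ u v : V, G.Adj u v →
          (∑ t ∈ Finset.range k, a u ^ t * a v ^ (k - 1 - t)) = 0)}).Finite ∧
    ({a : V → ℂ |
        (∀ v : V, a v ^ k - 1 = 0) ∧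
        (∀ u v : V, G.Adj u v →
          (∑ t ∈ Finset.range k, a u ^ t * a v ^ (k - 1 - t)) = 0)}).ncard =
      Nat.card {c : V → Fin k // ∀ u v : V, G.Adj u v → c u ≠ c v} := by
  have : NeZero k := ⟨hk.ne'⟩
  have hζ := Complex.isPrimitiveRoot_exp k hk.ne'
  change (coloringSystemZeros G k ℂ).Finite ∧ (coloringSystemZeros G k ℂ).ncard = _
  rw [coloringSystemZeros_eq_image G hζ (Nat.cast_ne_zero.mpr hk.ne'),
    Set.ncard_image_of_injective _ hζ.injective_pow_fin.comp_left, ← Nat.card_coe_set_eq]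
  exact ⟨(Set.toFinite _).image _, rfl⟩
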